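/- arXiv:2007.09720 — 4 statements merged into one kernel-verified Lean document; each statement's English description precedes it below -/
import Mathlib

section
/- Theorem 1, part 1 (convergence of the complete-data likelihood under CEM): Let N, P, K be positive integers, x : Fin N → EuclideanSpace ℝ (Fin P), y : Fin N → ℝ, and let Θ denote the set of parameters θ = (π, β, σ) with π : Fin K → ℝ, π k > 0, ∑ k, π k = 1, β : Fin K → EuclideanSpace ℝ (Fin P), σ : Fin K → ℝ, σ k > 0. Suppose M : (Fin N → Fin K) → Θ satisfies Lc(z₀, M z₀) ≥ Lc(z₀, θ₀) for every assignment z₀ and every θ₀ ∈ Θ. Let z : ℕ → (Fin N → Fin K) and θ : ℕ → Θ satisfy, for every m: Lc(z (m+1), θ m) ≥ Lc(z₀, θ m) for all assignments z₀ (C-step), and θ (m+1) = M (z (m+1)) (M-step). Then there exists M₀ such that Lc(z m, θ m) = Lc(z M₀, θ M₀) for all m ≥ M₀; in particular the sequence m ↦ Lc(z m, θ m) converges to a stationary value. -/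
open scoped BigOperators InnerProductSpace

/-- Gaussian density with mean `μ` and standard deviation `s`. -/
noncomputable def gauss (y μ s : ℝ) : ℝ :=
  (Real.sqrt (2 * Real.pi * s ^ 2))⁻¹ * Real.exp (-(y - μ) ^ 2 / (2 * s ^ 2))

/-- The parameter space `Θ` of the `K`-component mixture of Gaussian regressions:
mixing proportions, regression coefficients and standard deviations. -/
structure MixParams (P K : ℕ) where
  mix : Fin K → ℝ
  coef : Fin K → EuclideanSpace ℝ (Fin P)
  sd : Fin K → ℝ
  mix_pos : ∀ k, 0 < mix k
  mix_sum : ∑ k, mix k = 1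
  sd_pos : ∀ k, 0 < sd k

/-- The complete-data log-likelihood `Lc(z, θ)`. -/
noncomputable def Lc {N P K : ℕ} (x : Fin N → EuclideanSpace ℝ (Fin P)) (y : Fin N → ℝ)
    (z : Fin N → Fin K) (θ : MixParams P K) : ℝ :=
  ∑ i, (Real.log (θ.mix (z i)) +
    Real.log (gauss (y i) (⟪x i, θ.coef (z i)⟫_ℝ) (θ.sd (z i))))

/-- Theorem 1, part 1: along the CEM iterations the complete-data log-likelihood
becomes stationary after finitely many steps (hence converges). -/
theorem cem_likelihood_converges {N P K : ℕ} (hN : 0 < N) (hP : 0 < P) (hK : 0 < K)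
    (x : Fin N → EuclideanSpace ℝ (Fin P)) (y : Fin N → ℝ)
    (M : (Fin N → Fin K) → MixParams P K)
    (hM : ∀ (z₀ : Fin N → Fin K) (θ₀ : MixParams P K),
      Lc x y z₀ (M z₀) ≥ Lc x y z₀ θ₀)
    (z : ℕ → (Fin N → Fin K)) (θ : ℕ → MixParams P K)
    (hC : ∀ (m : ℕ) (z₀ : Fin N → Fin K),
      Lc x y (z (m + 1)) (θ m) ≥ Lc x y z₀ (θ m))
    (hMstep : ∀ m : ℕ, θ (m + 1) = M (z (m + 1))) :
    ∃ M₀ : ℕ, ∀ m ≥ M₀, Lc x y (z m) (θ m) = Lc x y (z M₀) (θ M₀) := by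
  classical
  set a : ℕ → ℝ := fun m => Lc x y (z m) (θ m) with ha
  have hmono : Monotone a := by
    apply monotone_nat_of_le_succ
    intro m
    calc a m ≤ Lc x y (z (m + 1)) (θ m) := hC m (z m)
      _ ≤ a (m + 1) := by
          show _ ≤ Lc x y (z (m + 1)) (θ (m + 1))
          rw [hMstep m]; exact hM (z (m + 1)) (θ m)
  set S : Finset ℝ := Finset.univ.image (fun z₀ : Fin N → Fin K => Lc x y z₀ (M z₀)) with hS
  have hmem : ∀ m, a (m + 1) ∈ S := by
    intro m
    simp only [hS, Finset.mem_image]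
    exact ⟨z (m + 1), Finset.mem_univ _, by simp only [ha]; rw [hMstep m]⟩
  set T : Finset ℝ := S.filter (fun v => ∃ m, a (m + 1) = v) with hT
  have hTne : T.Nonempty := ⟨a 1, by
    rw [hT, Finset.mem_filter]; exact ⟨hmem 0, 0, rfl⟩⟩
  obtain ⟨m₀, hm₀⟩ : ∃ m, a (m + 1) = T.max' hTne := by
    exact (Finset.mem_filter.mp (T.max'_mem hTne)).2
  refine ⟨m₀ + 1, fun m hm => ?_⟩
  obtain ⟨m', rfl⟩ := Nat.exists_eq_add_of_le (le_trans (Nat.le_add_left 1 m₀) hm)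
  have hle : a (1 + m') ≤ T.max' hTne := by
    apply T.le_max' _
    rw [hT, Finset.mem_filter]
    have : 1 + m' = m' + 1 := Nat.add_comm 1 m'
    rw [this]
    exact ⟨hmem m', m', rfl⟩
  have hge : T.max' hTne ≤ a (1 + m') := hm₀ ▸ hmono hm
  show a (1 + m') = a (m₀ + 1)
  rw [hm₀]
  exact le_antisymm hle hge
end

section
/- Theorem 1, part 2 (convergence of the CEM sequence itself): Under the hypotheses of Theorem 1 part 1 (sequences z : ℕ → (Fin N → Fin K), θ : ℕ → Θ with C-step optimality Lc(z (m+1), θ m) ≥ Lc(z₀, θ m) for all z₀, M-step θ (m+1) = M (z (m+1)) where Lc(z₀, M z₀) ≥ Lc(z₀, θ₀) for all z₀, θ₀), assume in addition the tie-breaking rule: for every m, if Lc(z m, θ m) ≥ Lc(z₀, θ m) for all assignments z₀ (i.e., the current assignment already attains the C-step maximum), then z (m+1) = z m. Then there exists M₀ ≥ 1 such that z m = z M₀ and θ m = θ M₀ for all m ≥ M₀; i.e., the sequence (z m, θ m) converges to a stationary position in finitely many iterations. -/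
open scoped BigOperators InnerProductSpace

/-!
Along a CEM run the objective `L (z m) (θ m)` is nondecreasing, and from `m = 1` on the
parameter is a function of the assignment, `θ m = M (z m)`. Since there are finitely many
assignments, two of them coincide, so the objective fails to increase at some step `m ≥ 1`.
There `z m` already attains the C-step maximum, the tie-breaking rule freezes the assignment,
and then the parameter is frozen as well.
-/

structure IsCEMRun {Z Θ α : Type*} [Preorder α] (L : Z → Θ → α) (M : Z → Θ)
    (z : ℕ → Z) (θ : ℕ → Θ) : Prop where
  le_maximizer : ∀ z₀ θ₀, L z₀ θ₀ ≤ L z₀ (M z₀)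
  c_step : ∀ m z₀, L z₀ (θ m) ≤ L (z (m + 1)) (θ m)
  m_step : ∀ m, θ (m + 1) = M (z (m + 1))
  tie : ∀ m, (∀ z₀, L z₀ (θ m) ≤ L (z m) (θ m)) → z (m + 1) = z m

namespace IsCEMRun

variable {Z Θ α : Type*} [Preorder α] {L : Z → Θ → α} {M : Z → Θ} {z : ℕ → Z} {θ : ℕ → Θ}

theorem le_m_step (h : IsCEMRun L M z θ) (m : ℕ) :
    L (z (m + 1)) (θ m) ≤ L (z (m + 1)) (θ (m + 1)) :=
  h.m_step m ▸ h.le_maximizer _ _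

theorem monotone (h : IsCEMRun L M z θ) : Monotone fun m => L (z m) (θ m) :=
  monotone_nat_of_le_succ fun m => (h.c_step m (z m)).trans (h.le_m_step m)

theorem succ_eq_of_le (h : IsCEMRun L M z θ) {m : ℕ}
    (hle : L (z (m + 1)) (θ (m + 1)) ≤ L (z m) (θ m)) : z (m + 1) = z m :=
  h.tie m fun z₀ => ((h.c_step m z₀).trans (h.le_m_step m)).trans hle

theorem stationary_of_succ_eq (h : IsCEMRun L M z θ) {m : ℕ} (hm : 1 ≤ m)
    (hz : z (m + 1) = z m) : ∀ n ≥ m, z n = z m ∧ θ n = θ m := by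
  have hfreeze : ∀ n ≥ m, z (n + 1) = z n → θ (n + 1) = θ n := by
    intro n hn hzn
    obtain ⟨k, rfl⟩ : ∃ k, n = k + 1 := Nat.exists_eq_add_one.mpr (by omega)
    rw [h.m_step, h.m_step, hzn]
  have hsucc : ∀ n ≥ m, z (n + 1) = z n := by
    intro n hn
    induction n, hn using Nat.le_induction with
    | base => exact hz
    | succ n hn ih =>
      refine h.tie (n + 1) fun z₀ => ?_
      rw [hfreeze n hn ih]
      exact h.c_step n z₀
  intro n hn
  induction n, hn using Nat.le_induction with
  | base => exact ⟨rfl, rfl⟩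
  | succ n hn ih => exact ⟨(hsucc n hn).trans ih.1, (hfreeze n hn (hsucc n hn)).trans ih.2⟩

theorem exists_succ_eq [Finite Z] (h : IsCEMRun L M z θ) :
    ∃ m, 1 ≤ m ∧ z (m + 1) = z m := by
  obtain ⟨a, b, hab, hzab⟩ := Finite.exists_ne_map_eq_of_infinite fun m => z (m + 1)
  wlog hlt : a < b generalizing a b
  · exact this b a hab.symm hzab.symm (by omega)
  have hθab : θ (a + 1) = θ (b + 1) := by rw [h.m_step, h.m_step, hzab]
  refine ⟨a + 1, by omega, h.succ_eq_of_le ?_⟩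
  calc L (z (a + 1 + 1)) (θ (a + 1 + 1)) ≤ L (z (b + 1)) (θ (b + 1)) := h.monotone (by omega)
    _ = L (z (a + 1)) (θ (a + 1)) := by rw [hzab, hθab]

theorem eventually_stationary [Finite Z] (h : IsCEMRun L M z θ) :
    ∃ M₀, 1 ≤ M₀ ∧ ∀ m ≥ M₀, z m = z M₀ ∧ θ m = θ M₀ :=
  let ⟨m, hm, hz⟩ := h.exists_succ_eq
  ⟨m, hm, h.stationary_of_succ_eq hm hz⟩

end IsCEMRun

theorem cem_sequence_converges_general {N P K : ℕ}
    (x : Fin N → EuclideanSpace ℝ (Fin P)) (y : Fin N → ℝ)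
    (M : (Fin N → Fin K) → MixParams P K)
    (hM : ∀ (z₀ : Fin N → Fin K) (θ₀ : MixParams P K),
      Lc x y z₀ (M z₀) ≥ Lc x y z₀ θ₀)
    (z : ℕ → (Fin N → Fin K)) (θ : ℕ → MixParams P K)
    (hC : ∀ (m : ℕ) (z₀ : Fin N → Fin K),
      Lc x y (z (m + 1)) (θ m) ≥ Lc x y z₀ (θ m))
    (hMstep : ∀ m : ℕ, θ (m + 1) = M (z (m + 1)))
    (hTie : ∀ m : ℕ,
      (∀ z₀ : Fin N → Fin K, Lc x y (z m) (θ m) ≥ Lc x y z₀ (θ m)) → z (m + 1) = z m) :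
    ∃ M₀ : ℕ, 1 ≤ M₀ ∧ ∀ m ≥ M₀, z m = z M₀ ∧ θ m = θ M₀ :=
  IsCEMRun.eventually_stationary ⟨hM, hC, hMstep, hTie⟩

/-- Theorem 1, part 2: with the tie-breaking rule, the CEM sequence `(z m, θ m)`
itself is eventually constant, i.e. converges to a stationary position. -/
theorem cem_sequence_converges {N P K : ℕ} (hN : 0 < N) (hP : 0 < P) (hK : 0 < K)
    (x : Fin N → EuclideanSpace ℝ (Fin P)) (y : Fin N → ℝ)
    (M : (Fin N → Fin K) → MixParams P K)
    (hM : ∀ (z₀ : Fin N → Fin K) (θ₀ : MixParams P K),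
      Lc x y z₀ (M z₀) ≥ Lc x y z₀ θ₀)
    (z : ℕ → (Fin N → Fin K)) (θ : ℕ → MixParams P K)
    (hC : ∀ (m : ℕ) (z₀ : Fin N → Fin K),
      Lc x y (z (m + 1)) (θ m) ≥ Lc x y z₀ (θ m))
    (hMstep : ∀ m : ℕ, θ (m + 1) = M (z (m + 1)))
    (hTie : ∀ m : ℕ,
      (∀ z₀ : Fin N → Fin K, Lc x y (z m) (θ m) ≥ Lc x y z₀ (θ m)) → z (m + 1) = z m) :
    ∃ M₀ : ℕ, 1 ≤ M₀ ∧ ∀ m ≥ M₀, z m = z M₀ ∧ θ m = θ M₀ :=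
  cem_sequence_converges_general x y M hM z θ hC hMstep hTie
end

section
/- Closed form of the within-cluster profile log-likelihood: Let n, P be positive integers, x : Fin n → EuclideanSpace ℝ (Fin P), y : Fin n → ℝ. Suppose β̂ : EuclideanSpace ℝ (Fin P) satisfies ∑ i, (y i - ⟪x i, β̂⟫_ℝ)^2 ≤ ∑ i, (y i - ⟪x i, β⟫_ℝ)^2 for all β, and set R := ∑ i, (y i - ⟪x i, β̂⟫_ℝ)^2 with R > 0. Then for every β : EuclideanSpace ℝ (Fin P) and every s > 0, ∑ i, Real.log (φ (y i) (⟪x i, β⟫_ℝ) s) ≤ -(n / 2) * (Real.log (2 * Real.pi * R / n) + 1), with equality when β = β̂ and s = Real.sqrt (R / n). -/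
open scoped BigOperators InnerProductSpace

lemma log_gauss (y μ s : ℝ) (hs : 0 < s) :
    Real.log (gauss y μ s) =
      -(Real.log (2 * Real.pi * s ^ 2)) / 2 - (y - μ) ^ 2 / (2 * s ^ 2) := by
  have h1 : (0:ℝ) < 2 * Real.pi * s ^ 2 := by positivity
  have h2 : (0:ℝ) < Real.sqrt (2 * Real.pi * s ^ 2) := Real.sqrt_pos.mpr h1
  unfold gauss
  rw [Real.log_mul (by positivity) (Real.exp_ne_zero _), Real.log_inv, Real.log_exp,
    Real.log_sqrt h1.le]
  ring

lemma sum_log_gauss {n : ℕ} (y μ : Fin n → ℝ) (s : ℝ) (hs : 0 < s) :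
    ∑ i, Real.log (gauss (y i) (μ i) s) =
      -((n : ℝ) / 2) * Real.log (2 * Real.pi * s ^ 2)
        - (∑ i, (y i - μ i) ^ 2) / (2 * s ^ 2) := by
  simp only [log_gauss _ _ _ hs, Finset.sum_sub_distrib, Finset.sum_div,
    Finset.sum_const, Finset.card_univ, Fintype.card_fin, nsmul_eq_mul]
  ring

/-- Closed form of the within-cluster profile log-likelihood: the Gaussian
log-likelihood is bounded by `-(n/2) * (log (2π R / n) + 1)`, with equality at
the least-squares estimator `β̂` and `s = √(R / n)`. -/
theorem profile_loglik_closed_form {n P : ℕ} (hn : 0 < n) (hP : 0 < P)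
    (x : Fin n → EuclideanSpace ℝ (Fin P)) (y : Fin n → ℝ)
    (βhat : EuclideanSpace ℝ (Fin P))
    (hβhat : ∀ β : EuclideanSpace ℝ (Fin P),
      ∑ i, (y i - ⟪x i, βhat⟫_ℝ) ^ 2 ≤ ∑ i, (y i - ⟪x i, β⟫_ℝ) ^ 2)
    (R : ℝ) (hR : R = ∑ i, (y i - ⟪x i, βhat⟫_ℝ) ^ 2) (hRpos : 0 < R) :
    (∀ (β : EuclideanSpace ℝ (Fin P)) (s : ℝ), 0 < s →
      ∑ i, Real.log (gauss (y i) (⟪x i, β⟫_ℝ) s) ≤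
        -((n : ℝ) / 2) * (Real.log (2 * Real.pi * R / n) + 1)) ∧
    ∑ i, Real.log (gauss (y i) (⟪x i, βhat⟫_ℝ) (Real.sqrt (R / n))) =
      -((n : ℝ) / 2) * (Real.log (2 * Real.pi * R / n) + 1) := by
  have hn' : (0:ℝ) < n := by exact_mod_cast hn
  constructor
  · intro β s hs
    rw [sum_log_gauss]
    · set S := ∑ i, (y i - ⟪x i, β⟫_ℝ) ^ 2 with hS
      have hRS : R ≤ S := hR ▸ hβhat β
      set t : ℝ := R / (n * s ^ 2) with ht
      have htpos : 0 < t := by positivity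
      have hlog : Real.log t ≤ t - 1 := Real.log_le_sub_one_of_pos htpos
      have hprod : 2 * Real.pi * R / n = (2 * Real.pi * s ^ 2) * t := by
        rw [ht]
        field_simp
      have hlsum : Real.log (2 * Real.pi * R / n) =
          Real.log (2 * Real.pi * s ^ 2) + Real.log t := by
        rw [hprod, Real.log_mul (by positivity) (ne_of_gt htpos)]
      rw [hlsum]
      have hAB : R / (2 * s ^ 2) ≤ S / (2 * s ^ 2) := by
        apply div_le_div_of_nonneg_right hRS (by positivity)
      have hkey : (n : ℝ) / 2 * t = R / (2 * s ^ 2) := by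
        rw [ht]; field_simp
      nlinarith [mul_le_mul_of_nonneg_left hlog (by positivity : (0:ℝ) ≤ (n:ℝ)/2)]
    · exact hs
  · have hRn : (0:ℝ) < R / n := by positivity
    have hsq : Real.sqrt (R / n) ^ 2 = R / n := Real.sq_sqrt hRn.le
    rw [sum_log_gauss _ _ _ (Real.sqrt_pos.mpr hRn), hsq, ← hR]
    have : 2 * Real.pi * (R / n) = 2 * Real.pi * R / n := by ring
    rw [this]
    field_simp
    ring
end

section
/- M-step joint optimality from componentwise optimality: Let N, P, K be positive integers, x : Fin N → EuclideanSpace ℝ (Fin P), y : Fin N → ℝ, and z : Fin N → Fin K an assignment such that each cluster is nonempty, with n k := |{i : z i = k}| > 0 for all k. Suppose π̂ k = n k / N, and for each k, β̂ k : EuclideanSpace ℝ (Fin P) and σ̂ k > 0 satisfy ∑_{i : z i = k} Real.log (φ (y i) (⟪x i, β⟫_ℝ) s) ≤ ∑_{i : z i = k} Real.log (φ (y i) (⟪x i, β̂ k⟫_ℝ) (σ̂ k)) for all β and all s > 0. Then for every θ = (π, β, σ) with π k > 0, ∑ k, π k = 1, σ k > 0, one has Lc(z, θ) ≤ Lc(z,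 (π̂, β̂, σ̂)); i.e., the componentwise M-step updates jointly maximize the complete-data log-likelihood for the fixed partition z. -/
open scoped BigOperators InnerProductSpace

/-! The complete-data log-likelihood splits over the clusters of `z` into a multinomial term
`∑ k, n k * log (π k)`, which depends on the mixing proportions only, plus one Gaussian
regression log-likelihood per cluster, each depending on `(β k, σ k)` only. The regression terms
are maximized by hypothesis, and the multinomial term is maximized by `π k = n k / N` by Gibbs'
inequality `∑ p log q ≤ ∑ p log p`, a consequence of `log t ≤ t - 1`. -/

open Finset Real

theorem Real.sum_mul_log_le_sum_mul_log {ι : Type*} (s : Finset ι) {p q : ι → ℝ}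
    (hp : ∀ i ∈ s, 0 ≤ p i) (hq : ∀ i ∈ s, 0 < q i)
    (hpq : ∑ i ∈ s, q i ≤ ∑ i ∈ s, p i) :
    ∑ i ∈ s, p i * log (q i) ≤ ∑ i ∈ s, p i * log (p i) := by
  have key : ∀ i ∈ s, p i * log (q i) - p i * log (p i) ≤ q i - p i := by
    intro i hi
    rcases (hp i hi).eq_or_lt with hpi | hpi
    · simp [← hpi, (hq i hi).le]
    calc p i * log (q i) - p i * log (p i) = p i * log (q i / p i) := by
          rw [log_div (hq i hi).ne' hpi.ne']; ring
      _ ≤ p i * (q i / p i - 1) :=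
          mul_le_mul_of_nonneg_left (log_le_sub_one_of_pos (div_pos (hq i hi) hpi)) hpi.le
      _ = q i - p i := by field_simp
  have := sum_le_sum key
  rw [sum_sub_distrib, sum_sub_distrib] at this
  linarith

section Clusters

variable {N P K : ℕ} (x : Fin N → EuclideanSpace ℝ (Fin P)) (y : Fin N → ℝ) (z : Fin N → Fin K)

noncomputable def clusterLogLik (k : Fin K) (β : EuclideanSpace ℝ (Fin P)) (s : ℝ) : ℝ :=
  ∑ i ∈ univ.filter (fun i => z i = k), log (gauss (y i) (⟪x i, β⟫_ℝ) s)

theorem Lc_eq_sum_clusters (θ : MixParams P K) :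
    Lc x y z θ = ∑ k, ((univ.filter (fun i => z i = k)).card * log (θ.mix k) +
      clusterLogLik x y z k (θ.coef k) (θ.sd k)) := by
  rw [Lc, ← sum_fiberwise univ z]
  refine sum_congr rfl fun k _ => ?_
  rw [clusterLogLik, ← nsmul_eq_mul, ← sum_const, ← sum_add_distrib]
  exact sum_congr rfl fun i hi => by rw [(mem_filter.mp hi).2]

end Clusters

theorem mstep_joint_optimal_general {N P K : ℕ} (hN : 0 < N)
    (x : Fin N → EuclideanSpace ℝ (Fin P)) (y : Fin N → ℝ)
    (z : Fin N → Fin K)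
    (n : Fin K → ℕ)
    (hn : ∀ k, n k = (Finset.univ.filter (fun i => z i = k)).card)
    (θhat : MixParams P K)
    (hmix : ∀ k, θhat.mix k = (n k : ℝ) / N)
    (hopt : ∀ (k : Fin K) (β : EuclideanSpace ℝ (Fin P)) (s : ℝ), 0 < s →
      ∑ i ∈ Finset.univ.filter (fun i => z i = k),
          Real.log (gauss (y i) (⟪x i, β⟫_ℝ) s) ≤
        ∑ i ∈ Finset.univ.filter (fun i => z i = k),
          Real.log (gauss (y i) (⟪x i, θhat.coef k⟫_ℝ) (θhat.sd k))) :
    ∀ θ : MixParams P K, Lc x y z θ ≤ Lc x y z θhat := by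
  have hcard : ∀ k, ((univ.filter (fun i => z i = k)).card : ℝ) = N * θhat.mix k := by
    intro k
    rw [hmix, ← hn, mul_div_cancel₀ _ (Nat.cast_pos.mpr hN).ne']
  intro θ
  simp only [Lc_eq_sum_clusters, sum_add_distrib, hcard, mul_assoc, ← mul_sum]
  have hmult : ∑ k, θhat.mix k * log (θ.mix k) ≤ ∑ k, θhat.mix k * log (θhat.mix k) :=
    sum_mul_log_le_sum_mul_log univ (fun k _ => (θhat.mix_pos k).le) (fun k _ => θ.mix_pos k)
      (by rw [θ.mix_sum, θhat.mix_sum])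
  exact add_le_add (mul_le_mul_of_nonneg_left hmult (Nat.cast_nonneg N))
    (sum_le_sum fun k _ => hopt k (θ.coef k) (θ.sd k) (θ.sd_pos k))

/-- M-step joint optimality from componentwise optimality: the componentwise
updates (cluster proportions, within-cluster ML regression fits) jointly
maximize the complete-data log-likelihood for the fixed partition `z`. -/
theorem mstep_joint_optimal {N P K : ℕ} (hN : 0 < N) (hP : 0 < P) (hK : 0 < K)
    (x : Fin N → EuclideanSpace ℝ (Fin P)) (y : Fin N → ℝ)
    (z : Fin N → Fin K)
    (n : Fin K → ℕ)
    (hn : ∀ k, n k = (Finset.univ.filter (fun i => z i = k)).card)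
    (hnpos : ∀ k, 0 < n k)
    (θhat : MixParams P K)
    (hmix : ∀ k, θhat.mix k = (n k : ℝ) / N)
    (hopt : ∀ (k : Fin K) (β : EuclideanSpace ℝ (Fin P)) (s : ℝ), 0 < s →
      ∑ i ∈ Finset.univ.filter (fun i => z i = k),
          Real.log (gauss (y i) (⟪x i, β⟫_ℝ) s) ≤
        ∑ i ∈ Finset.univ.filter (fun i => z i = k),
          Real.log (gauss (y i) (⟪x i, θhat.coef k⟫_ℝ) (θhat.sd k))) :
    ∀ θ : MixParams P K, Lc x y z θ ≤ Lc x y z θhat :=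
  mstep_joint_optimal_general hN x y z n hn θhat hmix hopt
end
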